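/- arXiv:2412.11287 — 2 statements merged into one kernel-verified Lean document; each statement's English description precedes it below -/
import Mathlib

section
/- Let S ⊆ X be a non-empty generalised nice set and i ∈ I. Then S ∪ P_{0,i,i} = S ∪ {{0,0},{0,i},{i,i}} is a generalised nice set if and only if i ∉ I_S, where I_S = ∪_{{a,b} ∈ S} {a,b,a*b}. -/
/-- The seven lines of the Fano plane. -/
def fanoLines : List (List ℕ) := [[1,2,5],[5,6,7],[7,4,1],[1,3,6],[6,4,2],[2,7,3],[3,4,5]]

/-- The Fano operation `*` extended to `I₀ = {0,…,7}`: `0*i = i*0 = i`, `i*i = 0`,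
and for distinct `i, j ∈ I` it is the third point on the line through `i` and `j`. -/
def fstar (i j : ℕ) : ℕ :=
  if i = j then 0
  else if i = 0 then j
  else if j = 0 then i
  else
    match fanoLines.find? (fun l => l.contains i && l.contains j) with
    | some l => (l.filter (fun x => x != i && x != j)).headD 0
    | none => 0

/-- The points of the Fano plane. -/
def I : Set ℕ := {1,2,3,4,5,6,7}

/-- The extended point set `I₀ = I ∪ {0}`. -/
def I0 : Set ℕ := {0,1,2,3,4,5,6,7}

/-- `X₀`: unordered pairs from `I₀` (repetitions allowed). -/
def X0 : Set (Sym2 ℕ) := {z | ∃ i ∈ I0, ∃ j ∈ I0, z = s(i,j)}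

/-- `X`: unordered pairs of two distinct points of `I`. -/
def X : Set (Sym2 ℕ) := {z | ∃ i ∈ I, ∃ j ∈ I, i ≠ j ∧ z = s(i,j)}

/-- `X_F = {{0,i} : i ∈ I₀}`. -/
def XF : Set (Sym2 ℕ) := {z | ∃ i ∈ I0, z = s(0,i)}

/-- `P_{a,b,c}`. -/
def P (a b c : ℕ) : Set (Sym2 ℕ) :=
  {s(a,b), s(b,c), s(c,a), s(a, fstar b c), s(b, fstar c a), s(c, fstar a b)}

/-- A generalised nice set: a subset of `X₀` such that `{a,b},{a*b,c} ∈ T` implies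
`P_{a,b,c} ⊆ T` for all `a, b, c ∈ I₀`. -/
def IsGNS (T : Set (Sym2 ℕ)) : Prop :=
  T ⊆ X0 ∧ ∀ a ∈ I0, ∀ b ∈ I0, ∀ c ∈ I0,
    s(a,b) ∈ T → s(fstar a b, c) ∈ T → P a b c ⊆ T

/-- A nice set: a subset of `X` such that for all generative `i, j, k ∈ I`,
`{i,j},{i*j,k} ∈ T` implies `P_{i,j,k} ⊆ T`. -/
def IsNice (T : Set (Sym2 ℕ)) : Prop :=
  T ⊆ X ∧ ∀ i ∈ I, ∀ j ∈ I, ∀ k ∈ I, i ≠ j → i ≠ k → j ≠ k → k ≠ fstar i j →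
    s(i,j) ∈ T → s(fstar i j, k) ∈ T → P i j k ⊆ T

/-- The smallest generalised nice set containing `S`. -/
def gnsClosure (S : Set (Sym2 ℕ)) : Set (Sym2 ℕ) := ⋂₀ {T | IsGNS T ∧ S ⊆ T}

/-- A collineation of the Fano plane, realised as a permutation of `ℕ` fixing the
complement of `I` and preserving collinearity. -/
def IsColl (σ : Equiv.Perm ℕ) : Prop :=
  (∀ n, n ∉ I → σ n = n) ∧
  ∀ i ∈ I, ∀ j ∈ I, i ≠ j → σ (fstar i j) = fstar (σ i) (σ j)

lemma fstar_self (x : ℕ) : fstar x x = 0 := by simp [fstar]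

lemma fstar_zero_left (x : ℕ) : fstar 0 x = x := by
  rcases eq_or_ne x 0 with rfl | h
  · simp [fstar]
  · simp [fstar, Ne.symm h]

lemma fstar_zero_right (x : ℕ) : fstar x 0 = x := by
  rcases eq_or_ne x 0 with rfl | h
  · simp [fstar]
  · simp [fstar, h]

lemma I_ne_zero : ∀ i ∈ I, i ≠ 0 := by
  intro i hi
  simp only [I, Set.mem_insert_iff, Set.mem_singleton_iff] at hi
  omega

lemma I_sub_I0 : I ⊆ I0 := by
  intro x hx
  simp only [I, I0, Set.mem_insert_iff, Set.mem_singleton_iff] at hx ⊢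
  omega

lemma mem_X_elim {a b : ℕ} (h : s(a,b) ∈ X) : a ∈ I ∧ b ∈ I ∧ a ≠ b := by
  obtain ⟨x, hx, y, hy, hxy, heq⟩ := h
  rw [Sym2.eq_iff] at heq
  rcases heq with ⟨rfl, rfl⟩ | ⟨rfl, rfl⟩
  · exact ⟨hx, hy, hxy⟩
  · exact ⟨hy, hx, hxy.symm⟩

lemma fstar_prop : ∀ a ∈ I, ∀ b ∈ I, a ≠ b →
    fstar a b ∈ I ∧ fstar a b ≠ a ∧ fstar a b ≠ b := by
  intro a ha b hb hab
  simp only [I, Set.mem_insert_iff, Set.mem_singleton_iff] at ha hb ⊢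
  rcases ha with rfl|rfl|rfl|rfl|rfl|rfl|rfl <;>
    rcases hb with rfl|rfl|rfl|rfl|rfl|rfl|rfl <;> revert hab <;> decide

theorem gns_union_P0ii_iff (S : Set (Sym2 ℕ)) (hSX : S ⊆ X) (hS : IsGNS S)
    (hne : S.Nonempty) (i : ℕ) (hi : i ∈ I) :
    IsGNS (S ∪ {s(0,0), s(0,i), s(i,i)}) ↔
      ¬ ∃ a b : ℕ, s(a,b) ∈ S ∧ (i = a ∨ i = b ∨ i = fstar a b) := by
  have hi0 : i ≠ 0 := I_ne_zero i hi
  have hiI0 : i ∈ I0 := I_sub_I0 hi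
  have h00 : (0:ℕ) ∈ I0 := by simp [I0]
  have hnotS0 : ∀ c : ℕ, s(0,c) ∈ S → False := by
    intro c hc
    exact I_ne_zero 0 (mem_X_elim (hSX hc)).1 rfl
  constructor
  · rintro ⟨hTX0, hT⟩ ⟨a, b, hab, hio⟩
    obtain ⟨haI, hbI, hne'⟩ := mem_X_elim (hSX hab)
    have haI0 : a ∈ I0 := I_sub_I0 haI
    have hbI0 : b ∈ I0 := I_sub_I0 hbI
    have ha0 : a ≠ 0 := I_ne_zero a haI
    have hb0 : b ≠ 0 := I_ne_zero b hbI
    have h0iT : s(0,i) ∈ S ∪ {s(0,0), s(0,i), s(i,i)} := by right; simp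
    rcases hio with rfl | rfl | hif
    · -- i = a
      have hP := hT 0 h00 i hiI0 b hbI0 h0iT
        (by rw [fstar_zero_left]; exact Or.inl hab)
      have hmem : s(b,0) ∈ S ∪ {s(0,0), s(0,i), s(i,i)} := hP (by simp [P])
      rcases hmem with h | h
      · exact I_ne_zero 0 (mem_X_elim (hSX h)).2.1 rfl
      · have hbi : b ≠ i := hne'.symm
        simp only [Set.mem_insert_iff, Set.mem_singleton_iff, Sym2.eq_iff] at h
        omega
    · -- i = b
      have hP := hT 0 h00 i hiI0 a haI0 h0iT
        (by rw [fstar_zero_left]; left; rwa [Sym2.eq_swap])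
      have hmem : s(a,0) ∈ S ∪ {s(0,0), s(0,i), s(i,i)} := hP (by simp [P])
      rcases hmem with h | h
      · exact I_ne_zero 0 (mem_X_elim (hSX h)).2.1 rfl
      · simp only [Set.mem_insert_iff, Set.mem_singleton_iff, Sym2.eq_iff] at h
        omega
    · -- i = fstar a b
      have hfp := fstar_prop a haI b hbI hne'
      have hia : a ≠ i := by rw [hif]; exact Ne.symm hfp.2.1
      have h2 : s(fstar a b, 0) ∈ S ∪ {s(0,0), s(0,i), s(i,i)} := by
        have hsw : s(i,(0:ℕ)) = s(0,i) := Sym2.eq_swap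
        rw [← hif, hsw]; exact h0iT
      have hP := hT a haI0 b hbI0 0 h00 (Or.inl hab) h2
      have hmem : s(0,a) ∈ S ∪ {s(0,0), s(0,i), s(i,i)} := hP (by simp [P])
      rcases hmem with h | h
      · exact hnotS0 a h
      · simp only [Set.mem_insert_iff, Set.mem_singleton_iff, Sym2.eq_iff] at h
        omega
  · intro hni
    have key : ∀ c : ℕ, s(0,c) ∈ S ∪ {s(0,0), s(0,i), s(i,i)} → c = 0 ∨ c = i := by
      intro c hc
      rcases hc with h | h
      · exact absurd h (hnotS0 c)
      · simp only [Set.mem_insert_iff, Set.mem_singleton_iff, Sym2.eq_iff] at h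
        omega
    have keyi : ∀ c : ℕ, s(i,c) ∈ S ∪ {s(0,0), s(0,i), s(i,i)} → c = 0 ∨ c = i := by
      intro c hc
      rcases hc with h | h
      · exact absurd ⟨i, c, h, Or.inl rfl⟩ hni
      · simp only [Set.mem_insert_iff, Set.mem_singleton_iff, Sym2.eq_iff] at h
        omega
    refine ⟨?_, ?_⟩
    · rintro z (hz | hz)
      · obtain ⟨x, hx, y, hy, _, rfl⟩ := hSX hz
        exact ⟨x, I_sub_I0 hx, y, I_sub_I0 hy, rfl⟩
      · simp only [Set.mem_insert_iff, Set.mem_singleton_iff] at hz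
        rcases hz with rfl | rfl | rfl
        · exact ⟨0, h00, 0, h00, rfl⟩
        · exact ⟨0, h00, i, hiI0, rfl⟩
        · exact ⟨i, hiI0, i, hiI0, rfl⟩
    · intro a ha b hb c hc h1 h2
      rcases h1 with h1 | h1
      · obtain ⟨haI, hbI, hne'⟩ := mem_X_elim (hSX h1)
        have hfp := fstar_prop a haI b hbI hne'
        have hf0 : fstar a b ≠ 0 := I_ne_zero _ hfp.1
        have hfi : fstar a b ≠ i := fun h => hni ⟨a, b, h1, Or.inr (Or.inr h.symm)⟩
        rcases h2 with h2 | h2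
        · exact fun z hz => Or.inl (hS.2 a ha b hb c hc h1 h2 hz)
        · exfalso
          simp only [Set.mem_insert_iff, Set.mem_singleton_iff, Sym2.eq_iff] at h2
          omega
      · simp only [Set.mem_insert_iff, Set.mem_singleton_iff, Sym2.eq_iff] at h1
        have hPsub : ∀ x y z : ℕ, (x = 0 ∨ x = i) → (y = 0 ∨ y = i) → (z = 0 ∨ z = i) →
            P x y z ⊆ S ∪ {s(0,0), s(0,i), s(i,i)} := by
          rintro x y z (rfl|rfl) (rfl|rfl) (rfl|rfl) <;>
            · intro w hw
              right
              simp only [P, Set.mem_insert_iff, Set.mem_singleton_iff, fstar_self,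
                fstar_zero_left, fstar_zero_right] at hw ⊢
              rcases hw with rfl|rfl|rfl|rfl|rfl|rfl <;> simp [Sym2.eq_iff]
        have hab' : (a = 0 ∨ a = i) ∧ (b = 0 ∨ b = i) := by tauto
        obtain ⟨ha', hb'⟩ := hab'
        have hc' : c = 0 ∨ c = i := by
          rcases ha' with rfl | rfl <;> rcases hb' with rfl | rfl
          · exact key c (by rwa [fstar_self] at h2)
          · exact keyi c (by rwa [fstar_zero_left] at h2)
          · exact keyi c (by rwa [fstar_zero_right] at h2)
          · exact key c (by rwa [fstar_self] at h2)
        exact hPsub a b c ha' hb' hc'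
end

section
/- Let S ⊆ X be a non-empty generalised nice set. If I_S = I (i.e. every point of I lies on a line spanned by some pair of S), then there is no J with ∅ ≠ J ⊊ I such that S ∪ {{0,0}} ∪ {{0,j} : j ∈ J} is a generalised nice set; only J = I works, i.e. S ∪ X_F with X_F = {{0,i} : i ∈ I_0} is the unique such generalised nice set. -/
-- auxiliary lemmas

def F7 : Finset ℕ := {1,2,3,4,5,6,7}
def F8 : Finset ℕ := {0,1,2,3,4,5,6,7}

lemma mem_I_iff {i : ℕ} : i ∈ I ↔ i ∈ F7 := by simp [I, F7]
lemma mem_I0_iff {i : ℕ} : i ∈ I0 ↔ i ∈ F8 := by simp [I0, F8]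

lemma fstar_facts : ∀ a ∈ F7, ∀ b ∈ F7, a ≠ b →
    fstar a b ∈ F7 ∧ fstar a b ≠ a ∧ fstar a b ≠ b ∧ fstar b a = fstar a b := by decide

lemma fstar_zero : ∀ b ∈ F8, b ≠ 0 → fstar 0 b = b ∧ fstar b 0 = b := by decide

lemma fstar_I0' : ∀ a ∈ F8, ∀ b ∈ F8, fstar a b ∈ F8 := by decide

lemma lines_intersect : ∀ a ∈ F7, ∀ b ∈ F7, ∀ c ∈ F7, ∀ d ∈ F7, a ≠ b → c ≠ d →
    ∃ p ∈ F7, (p = a ∨ p = b ∨ p = fstar a b) ∧ (p = c ∨ p = d ∨ p = fstar c d) := by decide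

lemma zero_not_mem_I : (0:ℕ) ∉ I := by simp [I]
lemma ne_zero_of_mem_I {i : ℕ} (h : i ∈ I) : i ≠ 0 := fun e => zero_not_mem_I (e ▸ h)
lemma zero_mem_I0 : (0:ℕ) ∈ I0 := by simp [I0]
lemma mem_I0_of_mem_I {i : ℕ} (h : i ∈ I) : i ∈ I0 := by
  rw [mem_I_iff] at h; rw [mem_I0_iff]; revert h; revert i; decide

lemma fstar_mem_I {a b : ℕ} (ha : a ∈ I) (hb : b ∈ I) (hab : a ≠ b) : fstar a b ∈ I := by
  rw [mem_I_iff] at *; exact (fstar_facts a ha b hb hab).1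

lemma fstar_comm' {a b : ℕ} (ha : a ∈ I) (hb : b ∈ I) (hab : a ≠ b) : fstar b a = fstar a b := by
  rw [mem_I_iff] at *; exact (fstar_facts a ha b hb hab).2.2.2

lemma fstar_zero_left_s18 {b : ℕ} (hb : b ∈ I0) (h : b ≠ 0) : fstar 0 b = b :=
  (fstar_zero b (mem_I0_iff.mp hb) h).1
lemma fstar_zero_right_s18 {b : ℕ} (hb : b ∈ I0) (h : b ≠ 0) : fstar b 0 = b :=
  (fstar_zero b (mem_I0_iff.mp hb) h).2

lemma fstar_mem_I0 {a b : ℕ} (ha : a ∈ I0) (hb : b ∈ I0) : fstar a b ∈ I0 := by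
  rw [mem_I0_iff] at *; exact fstar_I0' a ha b hb

lemma mem_XF_left {a : ℕ} (h : a ∈ I0) : s(0,a) ∈ XF := ⟨a, h, rfl⟩
lemma mem_XF_right {a : ℕ} (h : a ∈ I0) : s(a,0) ∈ XF := ⟨a, h, Sym2.eq_swap⟩

lemma mem_XF_elim {a b : ℕ} (h : s(a,b) ∈ XF) : a = 0 ∨ b = 0 := by
  obtain ⟨i, hi, he⟩ := h
  rw [Sym2.eq_iff] at he
  rcases he with ⟨h1, _⟩ | ⟨_, h1⟩
  exacts [Or.inl h1, Or.inr h1]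

lemma P_subset {a b c : ℕ} {T : Set (Sym2 ℕ)} (h1 : s(a,b) ∈ T) (h2 : s(b,c) ∈ T)
    (h3 : s(c,a) ∈ T) (h4 : s(a, fstar b c) ∈ T) (h5 : s(b, fstar c a) ∈ T)
    (h6 : s(c, fstar a b) ∈ T) : P a b c ⊆ T := by
  intro z hz
  simp only [P, Set.mem_insert_iff, Set.mem_singleton_iff] at hz
  rcases hz with rfl|rfl|rfl|rfl|rfl|rfl <;> assumption

theorem gns_full_IS (S : Set (Sym2 ℕ)) (hSX : S ⊆ X) (hS : IsGNS S)
    (hne : S.Nonempty)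
    (hIS : ∀ n ∈ I, ∃ a b : ℕ, s(a,b) ∈ S ∧ (n = a ∨ n = b ∨ n = fstar a b)) :
    (∀ J : Set ℕ, J ⊆ I → J.Nonempty → J ≠ I →
      ¬ IsGNS (S ∪ {s(0,0)} ∪ {z | ∃ j ∈ J, z = s(0,j)})) ∧
    IsGNS (S ∪ XF) := by
  constructor
  · -- Part 1
    intro J hJI hJne hJneI hGNS
    set T : Set (Sym2 ℕ) := S ∪ {s(0,0)} ∪ {z | ∃ j ∈ J, z = s(0,j)} with hT
    obtain ⟨j, hjJ⟩ := hJne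
    have hjI : j ∈ I := hJI hjJ
    obtain ⟨n, hnI, hnJ⟩ : ∃ n, n ∈ I ∧ n ∉ J := by
      by_contra h
      push_neg at h
      exact hJneI (Set.Subset.antisymm hJI h)
    have hST : S ⊆ T := fun z hz => Or.inl (Or.inl hz)
    have h0j : s(0,j) ∈ T := Or.inr ⟨j, hjJ, rfl⟩
    have hTn : s(0,n) ∉ T := by
      intro h
      rcases h with (h | h) | h
      · exact zero_not_mem_I (mem_X_elim (hSX h)).1
      · rw [Set.mem_singleton_iff, Sym2.eq_iff] at h
        rcases h with ⟨_, h⟩ | ⟨_, h⟩ <;> exact ne_zero_of_mem_I hnI h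
      · obtain ⟨j', hj', he⟩ := h
        rw [Sym2.eq_iff] at he
        rcases he with ⟨_, rfl⟩ | ⟨h1, h2⟩
        · exact hnJ hj'
        · exact ne_zero_of_mem_I hnI h2
    -- step lemmas
    have step : ∀ a b : ℕ, s(a,b) ∈ S → s(0,a) ∈ T → s(0,b) ∈ T ∧ s(0, fstar a b) ∈ T := by
      intro a b hab h0a
      obtain ⟨haI, hbI, hne'⟩ := mem_X_elim (hSX hab)
      have ha0 := mem_I0_of_mem_I haI
      have hb0 := mem_I0_of_mem_I hbI
      have key := hGNS.2 0 zero_mem_I0 a ha0 b hb0 h0a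
        (by rw [fstar_zero_left_s18 ha0 (ne_zero_of_mem_I haI)]; exact hST hab)
      constructor
      · have := key (show s(b,0) ∈ P 0 a b from Or.inr (Or.inr (Or.inl rfl)))
        rwa [Sym2.eq_swap] at this
      · exact key (Or.inr (Or.inr (Or.inr (Or.inl rfl))))
    have step2 : ∀ a b : ℕ, s(a,b) ∈ S → s(0, fstar a b) ∈ T → s(0,a) ∈ T ∧ s(0,b) ∈ T := by
      intro a b hab h0f
      obtain ⟨haI, hbI, hne'⟩ := mem_X_elim (hSX hab)
      have key := hGNS.2 a (mem_I0_of_mem_I haI) b (mem_I0_of_mem_I hbI) 0 zero_mem_I0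
        (hST hab) (by rwa [Sym2.eq_swap] at h0f)
      constructor
      · exact key (show s(0,a) ∈ P a b 0 from Or.inr (Or.inr (Or.inl rfl)))
      · have := key (show s(b,0) ∈ P a b 0 from Or.inr (Or.inl rfl))
        rwa [Sym2.eq_swap] at this
    have litAll : ∀ a b : ℕ, s(a,b) ∈ S → ∀ p, (p = a ∨ p = b ∨ p = fstar a b) →
        s(0,p) ∈ T → ∀ q, (q = a ∨ q = b ∨ q = fstar a b) → s(0,q) ∈ T := by
      intro a b hab p hp h0p q hq
      obtain ⟨haI, hbI, hne'⟩ := mem_X_elim (hSX hab)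
      have hba : s(b,a) ∈ S := by rw [Sym2.eq_swap]; exact hab
      have hcomm := fstar_comm' haI hbI hne'
      have all3 : s(0,a) ∈ T ∧ s(0,b) ∈ T ∧ s(0, fstar a b) ∈ T := by
        rcases hp with rfl | rfl | rfl
        · obtain ⟨h1, h2⟩ := step p b hab h0p
          exact ⟨h0p, h1, h2⟩
        · obtain ⟨h1, h2⟩ := step p a hba h0p
          rw [hcomm] at h2
          exact ⟨h1, h0p, h2⟩
        · obtain ⟨h1, h2⟩ := step2 a b hab h0p
          exact ⟨h1, h2, h0p⟩
      rcases hq with rfl | rfl | rfl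
      exacts [all3.1, all3.2.1, all3.2.2]
    obtain ⟨c, d, hcd, hj3⟩ := hIS j hjI
    obtain ⟨a, b, hab, hn3⟩ := hIS n hnI
    obtain ⟨haI, hbI, hab'⟩ := mem_X_elim (hSX hab)
    obtain ⟨hcI, hdI, hcd'⟩ := mem_X_elim (hSX hcd)
    obtain ⟨p, _, hp1, hp2⟩ := lines_intersect a (mem_I_iff.mp haI) b (mem_I_iff.mp hbI)
      c (mem_I_iff.mp hcI) d (mem_I_iff.mp hdI) hab' hcd'
    have h0p : s(0,p) ∈ T := litAll c d hcd j hj3 h0j p hp2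
    exact hTn (litAll a b hab p hp1 h0p n hn3)
  · -- Part 2
    constructor
    · intro z hz
      rcases hz with hz | hz
      · obtain ⟨i, hi, j, hj, _, rfl⟩ := hSX hz
        exact ⟨i, mem_I0_of_mem_I hi, j, mem_I0_of_mem_I hj, rfl⟩
      · obtain ⟨i, hi, rfl⟩ := hz
        exact ⟨0, zero_mem_I0, i, hi, rfl⟩
    · intro a ha b hb c hc h1 h2
      rcases h1 with h1 | h1
      · -- s(a,b) ∈ S
        obtain ⟨haI, hbI, hab⟩ := mem_X_elim (hSX h1)
        have hfI : fstar a b ∈ I := fstar_mem_I haI hbI hab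
        rcases h2 with h2 | h2
        · exact fun z hz => Or.inl (hS.2 a ha b hb c hc h1 h2 hz)
        · rcases mem_XF_elim h2 with hf0 | hc0
          · exact absurd hf0 (ne_zero_of_mem_I hfI)
          · subst hc0
            have hba : s(b,a) ∈ S := by rw [Sym2.eq_swap]; exact h1
            apply P_subset
            · exact Or.inl h1
            · exact Or.inr (mem_XF_right hb)
            · exact Or.inr (mem_XF_left ha)
            · rw [fstar_zero_right_s18 hb (ne_zero_of_mem_I hbI)]; exact Or.inl h1
            · rw [fstar_zero_left_s18 ha (ne_zero_of_mem_I haI)]; exact Or.inl hba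
            · exact Or.inr (mem_XF_left (mem_I0_of_mem_I hfI))
      · -- s(a,b) ∈ XF
        rcases mem_XF_elim h1 with ha0 | hb0
        · subst ha0
          by_cases hb0 : b = 0
          · subst hb0
            have e00 : fstar 0 0 = 0 := rfl
            rw [e00] at h2
            rcases h2 with h2 | h2
            · exact absurd (mem_X_elim (hSX h2)).1 zero_not_mem_I
            · apply P_subset
              · exact Or.inr (mem_XF_left zero_mem_I0)
              · exact Or.inr h2
              · exact Or.inr (mem_XF_right hc)
              · exact Or.inr (mem_XF_left (fstar_mem_I0 zero_mem_I0 hc))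
              · exact Or.inr (mem_XF_left (fstar_mem_I0 hc zero_mem_I0))
              · rw [e00]; exact Or.inr (mem_XF_right hc)
          · rw [fstar_zero_left_s18 hb hb0] at h2
            have hbc : s(b,c) ∈ S ∪ XF := h2
            have hcb : s(c,b) ∈ S ∪ XF := by rw [Sym2.eq_swap]; exact h2
            apply P_subset
            · exact Or.inr (mem_XF_left hb)
            · exact hbc
            · exact Or.inr (mem_XF_right hc)
            · exact Or.inr (mem_XF_left (fstar_mem_I0 hb hc))
            · by_cases hc0 : c = 0
              · subst hc0; rw [show fstar 0 0 = 0 from rfl]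
                exact Or.inr (mem_XF_right hb)
              · rw [fstar_zero_right_s18 hc hc0]; exact hbc
            · rw [fstar_zero_left_s18 hb hb0]; exact hcb
        · subst hb0
          by_cases ha0 : a = 0
          · subst ha0
            have e00 : fstar 0 0 = 0 := rfl
            rw [e00] at h2
            rcases h2 with h2 | h2
            · exact absurd (mem_X_elim (hSX h2)).1 zero_not_mem_I
            · apply P_subset
              · exact Or.inr (mem_XF_left zero_mem_I0)
              · exact Or.inr h2
              · exact Or.inr (mem_XF_right hc)
              · exact Or.inr (mem_XF_left (fstar_mem_I0 zero_mem_I0 hc))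
              · exact Or.inr (mem_XF_left (fstar_mem_I0 hc zero_mem_I0))
              · rw [e00]; exact Or.inr (mem_XF_right hc)
          · rw [fstar_zero_right_s18 ha ha0] at h2
            have hac : s(a,c) ∈ S ∪ XF := h2
            have hca : s(c,a) ∈ S ∪ XF := by rw [Sym2.eq_swap]; exact h2
            apply P_subset
            · exact Or.inr (mem_XF_right ha)
            · exact Or.inr (mem_XF_left hc)
            · exact hca
            · by_cases hc0 : c = 0
              · subst hc0; rw [show fstar 0 0 = 0 from rfl]
                exact Or.inr (mem_XF_right ha)
              · rw [fstar_zero_left_s18 hc hc0]; exact hac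
            · exact Or.inr (mem_XF_left (fstar_mem_I0 hc ha))
            · rw [fstar_zero_right_s18 ha ha0]; exact hca
end
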